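/- Let X be a connected, locally connected, Hausdorff space, V a locally convex topological vector space, and f : X → V a continuous map with local convexity data and connected fibers. If f is closed onto its image f(X), then f is open onto its image and f(X) is locally convex; if moreover f(X) is closed in V, then f(X) is convex. -/

import Mathlib

/-- A set `C ⊆ V` is a cone with vertex `v₀`. -/
def IsConeWithVertex {V : Type*} [AddCommGroup V] [Module ℝ V]
    (C : Set V) (v₀ : V) : Prop :=
  v₀ ∈ C ∧ ∀ v ∈ C, v ≠ v₀ → ∀ l : ℝ, 0 ≤ l → (1 - l) • v₀ + l • v ∈ C

/-- `f` has local convexity data: for each `x` and every sufficiently small open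
neighborhood `U` of `x` there is a convex cone `C` with vertex `f x` such that
(VN) `f(U) ⊆ C` is a neighborhood of `f x` in `C` (subspace topology), and
(SLO) `f|_U : U → C` is an open map and for every smaller neighborhood `U'` of
`x` the set `f(U')` is a neighborhood of `f x` in `C`. -/
def HasLocalConvexityData {X V : Type*} [TopologicalSpace X] [TopologicalSpace V]
    [AddCommGroup V] [Module ℝ V] (f : X → V) : Prop :=
  ∀ x : X, ∀ W ∈ nhds x, ∃ U ∈ nhds x, U ⊆ W ∧ IsOpen U ∧ ∃ C : Set V,
    Convex ℝ C ∧ IsConeWithVertex C (f x) ∧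
    -- (VN)
    f '' U ⊆ C ∧ (∃ N ∈ nhds (f x), C ∩ N ⊆ f '' U) ∧
    -- (SLO): openness of `f|_U` into `C` ...
    (∀ O : Set X, IsOpen O → O ⊆ U → ∀ y ∈ O, ∃ N ∈ nhds (f y), C ∩ N ⊆ f '' O) ∧
    -- ... and `f(U')` is a neighborhood of the vertex for every smaller `U'`
    (∀ U' ∈ nhds x, U' ⊆ U → ∃ N ∈ nhds (f x), C ∩ N ⊆ f '' U')

/-- `f` is open onto its image `f(X)` (with the subspace topology). -/
def OpenOntoImage {X V : Type*} [TopologicalSpace X] [TopologicalSpace V]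
    (f : X → V) : Prop :=
  ∀ O : Set X, IsOpen O → ∃ W : Set V, IsOpen W ∧ f '' O = W ∩ Set.range f

/-- A subset `S` of a topological vector space is locally convex if every point
of `S` has a neighborhood in `V` whose intersection with `S` is convex. -/
def IsLocallyConvexSet {V : Type*} [TopologicalSpace V] [AddCommGroup V]
    [Module ℝ V] (S : Set V) : Prop :=
  ∀ v ∈ S, ∃ N ∈ nhds v, Convex ℝ (N ∩ S)

/-- `A` satisfies the locally fiber connected condition (LFC): `A` does not meet
two different connected components of any fiber of `f`. -/
def SatisfiesLFC {X V : Type*} [TopologicalSpace X] (f : X → V) (A : Set X) : Prop :=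
  ∀ a ∈ A, ∀ b ∈ A, f a = f b → b ∈ connectedComponentIn (f ⁻¹' {f a}) a

/-- `f` is locally fiber connected: every point has arbitrarily small
neighborhoods satisfying (LFC). -/
def LocallyFiberConnected {X V : Type*} [TopologicalSpace X] (f : X → V) : Prop :=
  ∀ x : X, ∀ W ∈ nhds x, ∃ U ∈ nhds x, U ⊆ W ∧ SatisfiesLFC f U

/-- `f` is closed onto its image `f(X)` (with the subspace topology). -/
def ClosedOntoImage {X V : Type*} [TopologicalSpace X] [TopologicalSpace V]
    (f : X → V) : Prop :=
  ∀ S : Set X, IsClosed S → ∃ T : Set V, IsClosed T ∧ f '' S = T ∩ Set.range f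

/-!
Fix `x` and local convexity data `(U, C)` at `x`. Two pieces of data at points of one fiber whose
domains are nested have cones with the same germ at the common vertex, so this germ is locally
constant, hence constant, along the connected fiber `f⁻¹(f x)`. The domains of data along the fiber
therefore form an open neighbourhood `W` of the fiber with `f(W) ⊆ C` near `f x`, and as `f` is
closed onto its image, `f(W)` contains `f(X)` near `f x`. So `f(X)` agrees with the convex cone `C`
near `f x`, which gives openness onto the image and local convexity.

A closed connected set `S` that is locally a convex cone at each of its points is convex (a version
of the Tietze–Nakajima theorem): for `a ∈ S` the set of `w` with `[w, a] ⊆ S` is closed, and it is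
open in `S` because each `q ∈ [w, a]` is the vertex of a local cone of `S` containing `a`; by
compactness of `[w, a]` these cones still cover the segments `[w', a]` for `w'` near `w`.
-/

open Set Filter Topology AffineMap

theorem ClosedOntoImage.image_mem_nhdsWithin_range {X V : Type*} [TopologicalSpace X]
    [TopologicalSpace V] {f : X → V} (h : ClosedOntoImage f) {W : Set X}
    (hW : IsOpen W) {x : X} (hx : f ⁻¹' {f x} ⊆ W) : f '' W ∈ 𝓝[range f] (f x) := by
  obtain ⟨T, hT, hTW⟩ := h Wᶜ hW.isClosed_compl
  have hxT : f x ∉ T := fun hxT => by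
    obtain ⟨y, hyW, hy⟩ : f x ∈ f '' Wᶜ := hTW ▸ ⟨hxT, mem_range_self x⟩
    exact hyW (hx hy)
  refine mem_nhdsWithin_iff_exists_mem_nhds_inter.2 ⟨Tᶜ, hT.isOpen_compl.mem_nhds hxT, ?_⟩
  rintro _ ⟨hyT, y, rfl⟩
  by_contra hy
  exact hyT (hTW.subset ⟨y, fun hyW => hy ⟨y, hyW, rfl⟩, rfl⟩).1

section Charts

variable {X V : Type*} [TopologicalSpace X] [TopologicalSpace V] [AddCommGroup V] [Module ℝ V]
  {f : X → V}

/-- One choice of `U` and `C` in `HasLocalConvexityData f` at `z`; its (VN) clause is the case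
`O = U`, `y = z` of the last field. -/
structure IsConvexityChart (f : X → V) (z : X) (U : Set X) (C : Set V) : Prop where
  isOpen : IsOpen U
  mem : z ∈ U
  convex : Convex ℝ C
  isConeWithVertex : IsConeWithVertex C (f z)
  image_subset : f '' U ⊆ C
  image_mem_nhdsWithin : ∀ O, IsOpen O → O ⊆ U → ∀ y ∈ O, f '' O ∈ 𝓝[C] (f y)

theorem HasLocalConvexityData.exists_chart (h : HasLocalConvexityData f) (z : X) {W : Set X}
    (hW : W ∈ 𝓝 z) : ∃ U C, U ⊆ W ∧ IsConvexityChart f z U C := by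
  obtain ⟨U, hU, hUW, hUo, C, hC, hCz, hfU, -, hopen, -⟩ := h z W hW
  refine ⟨U, C, hUW, hUo, mem_of_mem_nhds hU, hC, hCz, hfU, fun O hO hOU y hy => ?_⟩
  obtain ⟨N, hN, hCN⟩ := hopen O hO hOU y hy
  exact mem_nhdsWithin_iff_exists_mem_nhds_inter.2 ⟨N, hN, inter_comm N C ▸ hCN⟩

namespace IsConvexityChart

variable {z z' : X} {U U' : Set X} {C C' : Set V}

theorem eventuallyEq_of_subset (h : IsConvexityChart f z U C) (h' : IsConvexityChart f z' U' C')
    (hU' : U' ⊆ U) (hfz : f z' = f z) : C =ᶠ[𝓝 (f z)] C' := by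
  have hC : f '' U' ∈ 𝓝[C] (f z) := hfz ▸ h.image_mem_nhdsWithin U' h'.isOpen hU' z' h'.mem
  have hC' : f '' U' ∈ 𝓝[C'] (f z) :=
    hfz ▸ h'.image_mem_nhdsWithin U' h'.isOpen subset_rfl z' h'.mem
  rw [← nhdsWithin_eq_iff_eventuallyEq]
  exact le_antisymm (nhdsWithin_le_iff.2 (mem_of_superset hC h'.image_subset))
    (nhdsWithin_le_iff.2 (mem_of_superset hC' ((image_mono hU').trans h.image_subset)))

theorem eventuallyEq (hlcd : HasLocalConvexityData f) (h : IsConvexityChart f z U C)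
    (h' : IsConvexityChart f z' U' C') (hz' : z' ∈ U) (hfz : f z' = f z) :
    C =ᶠ[𝓝 (f z)] C' := by
  obtain ⟨U'', C'', hU'', h''⟩ :=
    hlcd.exists_chart z' (inter_mem (h.isOpen.mem_nhds hz') (h'.isOpen.mem_nhds h'.mem))
  have h'C'' := h'.eventuallyEq_of_subset h'' (hU''.trans inter_subset_right) rfl
  rw [hfz] at h'C''
  exact (h.eventuallyEq_of_subset h'' (hU''.trans inter_subset_left) hfz).trans h'C''.symm

theorem eventuallyEq_of_mem_fiber (hlcd : HasLocalConvexityData f)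
    (hfib : IsPreconnected (f ⁻¹' {f z})) (h : IsConvexityChart f z U C)
    (h' : IsConvexityChart f z' U' C') (hfz : f z' = f z) : C =ᶠ[𝓝 (f z)] C' := by
  refine hfib.induction₂' (fun y y' => ∀ U C U' C', IsConvexityChart f y U C →
    IsConvexityChart f y' U' C' → C =ᶠ[𝓝 (f z)] C') ?_ ?_ rfl hfz U C U' C' h h'
  · intro y (hy : f y = f z)
    obtain ⟨U₀, C₀, -, h₀⟩ := hlcd.exists_chart y univ_mem
    filter_upwards [nhdsWithin_le_nhds (h₀.isOpen.mem_nhds h₀.mem), self_mem_nhdsWithin]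
      with y' hy' (hfy' : f y' = f z)
    have hC₀ : ∀ U' C', IsConvexityChart f y' U' C' → C₀ =ᶠ[𝓝 (f z)] C' := fun U' C' h' =>
      hy ▸ h₀.eventuallyEq hlcd h' hy' (hfy'.trans hy.symm)
    have hC : ∀ U C, IsConvexityChart f y U C → C =ᶠ[𝓝 (f z)] C₀ := fun U C h =>
      hy ▸ h.eventuallyEq hlcd h₀ h.mem rfl
    exact ⟨fun U C U' C' h h' => (hC U C h).trans (hC₀ U' C' h'),
      fun U' C' U C h' h => ((hC U C h).trans (hC₀ U' C' h')).symm⟩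
  · intro y₁ y₂ y₃ _ _ _ h₁₂ h₂₃ U₁ C₁ U₃ C₃ h₁ h₃
    obtain ⟨U₂, C₂, -, h₂⟩ := hlcd.exists_chart y₂ univ_mem
    exact (h₁₂ U₁ C₁ U₂ C₂ h₁ h₂).trans (h₂₃ U₂ C₂ U₃ C₃ h₂ h₃)

theorem range_eventuallyEq (hf : Continuous f) (hlcd : HasLocalConvexityData f)
    (hfib : IsPreconnected (f ⁻¹' {f z})) (hclosed : ClosedOntoImage f)
    (h : IsConvexityChart f z U C) : range f =ᶠ[𝓝 (f z)] C := by
  choose! Uy Cy _ hy using fun y => hlcd.exists_chart y univ_mem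
  set W := ⋃ y ∈ f ⁻¹' {f z}, Uy y ∩ f ⁻¹' interior {v | v ∈ Cy y ↔ v ∈ C}
  have hW : IsOpen W :=
    isOpen_biUnion fun y _ => (hy y).isOpen.inter (isOpen_interior.preimage hf)
  have hfibW : f ⁻¹' {f z} ⊆ W := fun y (hyz : f y = f z) => by
    refine mem_biUnion hyz ⟨(hy y).mem, ?_⟩
    rw [mem_preimage, hyz, mem_interior_iff_mem_nhds]
    exact eventuallyEq_set.1 (h.eventuallyEq_of_mem_fiber hlcd hfib (hy y) hyz).symm
  have hWC : f '' W ⊆ C := by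
    rintro _ ⟨p, hp, rfl⟩
    obtain ⟨y, -, hpU, hpC⟩ := mem_iUnion₂.1 hp
    exact (interior_subset hpC).1 ((hy y).image_subset (mem_image_of_mem f hpU))
  rw [← nhdsWithin_eq_iff_eventuallyEq]
  exact le_antisymm
    (nhdsWithin_le_iff.2 (mem_of_superset (hclosed.image_mem_nhdsWithin_range hW hfibW) hWC))
    (nhdsWithin_le_iff.2 (mem_of_superset (h.image_mem_nhdsWithin U h.isOpen subset_rfl z h.mem)
      (image_subset_range f U)))

end IsConvexityChart

theorem HasLocalConvexityData.image_mem_nhdsWithin_range (hf : Continuous f)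
    (hlcd : HasLocalConvexityData f) (hfib : ∀ v : V, IsPreconnected (f ⁻¹' {v}))
    (hclosed : ClosedOntoImage f) {x : X} {O : Set X} (hO : O ∈ 𝓝 x) :
    f '' O ∈ 𝓝[range f] (f x) := by
  obtain ⟨U, C, hUO, h⟩ := hlcd.exists_chart x hO
  rw [nhdsWithin_eq_iff_eventuallyEq.2 (h.range_eventuallyEq hf hlcd (hfib _) hclosed)]
  exact mem_of_superset (h.image_mem_nhdsWithin U h.isOpen subset_rfl x h.mem) (image_mono hUO)

end Charts

theorem openOntoImage_of_image_mem_nhdsWithin {X V : Type*} [TopologicalSpace X]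
    [TopologicalSpace V] {f : X → V} (h : ∀ x, ∀ O ∈ 𝓝 x, f '' O ∈ 𝓝[range f] (f x)) :
    OpenOntoImage f := by
  intro O hO
  choose! W hW hxW hWO using fun x (hx : x ∈ O) => mem_nhdsWithin.1 (h x O (hO.mem_nhds hx))
  refine ⟨⋃ x ∈ O, W x, isOpen_biUnion hW, Subset.antisymm ?_ ?_⟩
  · rintro _ ⟨x, hx, rfl⟩
    exact ⟨mem_biUnion hx (hxW x hx), mem_range_self x⟩
  · rintro v ⟨hv, hvr⟩
    obtain ⟨x, hx, hvW⟩ := mem_iUnion₂.1 hv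
    exact hWO x hx ⟨hvW, hvr⟩

section Cone

variable {V : Type*} [AddCommGroup V] [Module ℝ V]

theorem IsConeWithVertex.mem_of_lineMap_mem {C : Set V} {p a : V} (hC : IsConeWithVertex C p)
    {ε : ℝ} (hε : 0 < ε) (h : lineMap p a ε ∈ C) : a ∈ C := by
  rcases eq_or_ne (lineMap p a ε) p with hp | hp
  · rw [lineMap_eq_left_iff] at hp
    exact hp.resolve_right hε.ne' ▸ hC.1
  · convert hC.2 _ h hp ε⁻¹ (inv_nonneg.2 hε.le) using 1
    rw [lineMap_apply_module]
    match_scalars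
    · field_simp
    · field_simp; ring

variable [TopologicalSpace V]

def IsLocallyConvexCone (S : Set V) : Prop :=
  ∀ p ∈ S, ∃ C, Convex ℝ C ∧ IsConeWithVertex C p ∧ S =ᶠ[𝓝 p] C

theorem IsLocallyConvexCone.isLocallyConvexSet [LocallyConvexSpace ℝ V] {S : Set V}
    (hS : IsLocallyConvexCone S) : IsLocallyConvexSet S := by
  intro v hv
  obtain ⟨C, hC, -, hSC⟩ := hS v hv
  obtain ⟨D, ⟨hD, hDc⟩, hDSC⟩ :=
    (LocallyConvexSpace.convex_basis (𝕜 := ℝ) v).mem_iff.1 (eventuallyEq_set.1 hSC)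
  have hDS : D ∩ S = D ∩ C := by
    ext w
    exact and_congr_right fun hw => hDSC hw
  exact ⟨D, hD, hDS ▸ hDc.inter hC⟩

end Cone

section Segment

variable {V : Type*} [AddCommGroup V] [Module ℝ V] [TopologicalSpace V]
  [IsTopologicalAddGroup V] [ContinuousSMul ℝ V] {S : Set V}

theorem IsConeWithVertex.mem_of_segment_subset {C : Set V} {p a : V}
    (hC : IsConeWithVertex C p) (hSC : S =ᶠ[𝓝 p] C) (hpa : segment ℝ p a ⊆ S) : a ∈ C := by
  have hcont : Tendsto (lineMap p a : ℝ → V) (𝓝[>] 0) (𝓝 p) := by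
    simpa using ((show Continuous (lineMap p a : ℝ → V) by fun_prop).tendsto 0).mono_left
      nhdsWithin_le_nhds
  obtain ⟨ε, hSC, hε⟩ :=
    ((hcont.eventually (eventuallyEq_set.1 hSC)).and (Ioo_mem_nhdsGT one_pos)).exists
  exact hC.mem_of_lineMap_mem hε.1 (hSC.1 (hpa (lineMap_mem_segment _ _ _ (Ioo_subset_Icc_self hε))))

theorem isClosed_setOf_segment_subset (hS : IsClosed S) (a : V) :
    IsClosed {x | segment ℝ x a ⊆ S} := by
  have : {x | segment ℝ x a ⊆ S} = ⋂ t ∈ Icc (0 : ℝ) 1, (fun x => lineMap x a t) ⁻¹' S := by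
    ext x
    simp only [mem_ofPred_eq, segment_eq_image_lineMap, image_subset_iff, mem_iInter₂]
    rfl
  rw [this]
  exact isClosed_biInter fun t _ => hS.preimage (by fun_prop)

theorem segment_subset_of_forall_eventually_mem_iff_convex (hS : IsClosed S) {a b : V}
    (hb : b ∈ S) (h : ∀ t ∈ Icc (0 : ℝ) 1, ∃ C : Set V, Convex ℝ C ∧ a ∈ C ∧
      ∀ᶠ s in 𝓝 t, (lineMap b a s ∈ S ↔ lineMap b a s ∈ C)) :
    segment ℝ b a ⊆ S := by
  rw [segment_eq_image_lineMap, image_subset_iff]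
  -- Real induction on `t`: once `lineMap b a t ∈ S`, it lies in a convex `C ∋ a` that agrees with
  -- `S` near it, and so do the points of the segment just beyond it.
  refine IsClosed.Icc_subset_of_forall_mem_nhdsWithin
    ((hS.preimage lineMap_continuous).inter isClosed_Icc) (by simpa using hb) ?_
  rintro t ⟨ht, ht0, ht1⟩
  obtain ⟨C, hC, haC, hSC⟩ := h t ⟨ht0, ht1.le⟩
  have htC : lineMap b a t ∈ C := hSC.self_of_nhds.1 ht
  filter_upwards [Ioo_mem_nhdsGT ht1, nhdsWithin_le_nhds hSC] with s hs hsSC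
  refine hsSC.2 (hC.mem_of_wbtw ?_ htC haC)
  simpa using (Wbtw.of_le_of_le hs.1.le hs.2.le).map (lineMap b a)

theorem IsLocallyConvexCone.eventually_segment_subset (hloc : IsLocallyConvexCone S)
    (hS : IsClosed S) {a w : V} (hw : segment ℝ w a ⊆ S) :
    ∀ᶠ w' in 𝓝 w, w' ∈ S → segment ℝ w' a ⊆ S := by
  choose! C hC hCp hSC using hloc
  have hlocal : ∀ t ∈ Icc (0 : ℝ) 1, ∀ᶠ z : V × ℝ in 𝓝 (w, t), ∃ C' : Set V, Convex ℝ C' ∧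
      a ∈ C' ∧ ∀ᶠ s in 𝓝 z.2, (lineMap z.1 a s ∈ S ↔ lineMap z.1 a s ∈ C') := by
    intro t ht
    have hq : lineMap w a t ∈ S := hw (lineMap_mem_segment _ _ _ ht)
    have haC : a ∈ C (lineMap w a t) := (hCp _ hq).mem_of_segment_subset (hSC _ hq)
      (((convex_segment w a).segment_subset (lineMap_mem_segment _ _ _ ht)
        (right_mem_segment _ _ _)).trans hw)
    have hnear : ∀ᶠ z : V × ℝ in 𝓝 (w, t),
        (lineMap z.1 a z.2 ∈ S ↔ lineMap z.1 a z.2 ∈ C (lineMap w a t)) :=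
      (show Continuous fun z : V × ℝ => lineMap z.1 a z.2 by fun_prop).continuousAt.eventually
        (eventuallyEq_set.1 (hSC _ hq))
    filter_upwards [hnear.eventually_nhds] with z hz
    exact ⟨_, hC _ hq, haC, (tendsto_const_nhds.prodMk_nhds tendsto_id).eventually hz⟩
  filter_upwards [isCompact_Icc.eventually_forall_of_forall_eventually (P := fun w' t =>
    ∃ C' : Set V, Convex ℝ C' ∧ a ∈ C' ∧ ∀ᶠ s in 𝓝 t, (lineMap w' a s ∈ S ↔ lineMap w' a s ∈ C'))
    hlocal] with w' hw' hw'S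
  exact segment_subset_of_forall_eventually_mem_iff_convex hS hw'S hw'

theorem IsLocallyConvexCone.convex (hloc : IsLocallyConvexCone S) (hS : IsClosed S)
    (hconn : IsPreconnected S) : Convex ℝ S := by
  refine convex_iff_segment_subset.2 fun a ha w hw => ?_
  rw [segment_symm]
  refine (hconn.induction₂' (fun x y => segment ℝ x a ⊆ S ↔ segment ℝ y a ⊆ S) ?_
    (fun _ _ _ _ _ _ => Iff.trans) ha hw).1 (by simpa using ha)
  intro x _
  by_cases hx : segment ℝ x a ⊆ S
  · filter_upwards [nhdsWithin_le_nhds (hloc.eventually_segment_subset hS hx),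
      self_mem_nhdsWithin] with y hy hyS
    simp [hx, hy hyS]
  · filter_upwards [nhdsWithin_le_nhds
      ((isClosed_setOf_segment_subset hS a).isOpen_compl.mem_nhds hx)] with y hy
    simp_all

end Segment

theorem isLocallyConvexCone_range {X V : Type*} [TopologicalSpace X] [TopologicalSpace V]
    [AddCommGroup V] [Module ℝ V] {f : X → V} (hf : Continuous f)
    (hlcd : HasLocalConvexityData f) (hfib : ∀ v : V, IsPreconnected (f ⁻¹' {v}))
    (hclosed : ClosedOntoImage f) : IsLocallyConvexCone (range f) := by
  rintro _ ⟨x, rfl⟩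
  obtain ⟨U, C, -, h⟩ := hlcd.exists_chart x univ_mem
  exact ⟨C, h.convex, h.isConeWithVertex, h.range_eventuallyEq hf hlcd (hfib _) hclosed⟩

theorem stmt_9_general {X V : Type*} [TopologicalSpace X] [ConnectedSpace X]
    [TopologicalSpace V] [AddCommGroup V] [Module ℝ V]
    [IsTopologicalAddGroup V] [ContinuousSMul ℝ V] [LocallyConvexSpace ℝ V]
    {f : X → V} (hf : Continuous f) (hlcd : HasLocalConvexityData f)
    (hfib : ∀ v : V, IsPreconnected (f ⁻¹' {v}))
    (hclosed : ClosedOntoImage f) :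
    OpenOntoImage f ∧ IsLocallyConvexSet (Set.range f) ∧
      (IsClosed (Set.range f) → Convex ℝ (Set.range f)) := by
  have hcone := isLocallyConvexCone_range hf hlcd hfib hclosed
  exact ⟨openOntoImage_of_image_mem_nhdsWithin fun _ _ hO =>
      hlcd.image_mem_nhdsWithin_range hf hfib hclosed hO,
    hcone.isLocallyConvexSet, fun hcl => hcone.convex hcl (isPreconnected_range hf)⟩

/-- Let `X` be a connected, locally connected Hausdorff space, `V` a locally
convex topological vector space, and `f : X → V` continuous with local convexity
data, locally fiber connected, and with connected fibers. If `f` is closed onto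
its image, then `f` is open onto its image and `f(X)` is locally convex; if
moreover `f(X)` is closed in `V`, then `f(X)` is convex. -/
theorem stmt_9 {X V : Type*} [TopologicalSpace X] [T2Space X] [ConnectedSpace X]
    [LocallyConnectedSpace X]
    [TopologicalSpace V] [AddCommGroup V] [Module ℝ V]
    [IsTopologicalAddGroup V] [ContinuousSMul ℝ V] [LocallyConvexSpace ℝ V]
    {f : X → V} (hf : Continuous f) (hlcd : HasLocalConvexityData f)
    (hlfc : LocallyFiberConnected f)
    (hfib : ∀ v : V, IsPreconnected (f ⁻¹' {v}))
    (hclosed : ClosedOntoImage f) :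
    OpenOntoImage f ∧ IsLocallyConvexSet (Set.range f) ∧
      (IsClosed (Set.range f) → Convex ℝ (Set.range f)) :=
  stmt_9_general hf hlcd hfib hclosed
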